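/- arXiv:1612.03857 — 6 statements merged into one kernel-verified Lean document; each statement's English description precedes it below -/
import Mathlib

section
/- Let H be a complex Hilbert space and let A, C be bounded linear operators on H. Then the range of C is contained in the range of A if and only if there exists a bounded linear operator D on H such that A ∘ D = C (i.e., the equation AX = C has a solution). Moreover, if these equivalent conditions hold, then there exists λ > 0 such that C ∘ C* ≤ λ • (A ∘ A*) in the Loewner order. -/
/-!
Restricted to `(ker A)ᗮ`, the operator `A` is injective with the same range, so `range C ≤ range A`
lets `C` factor through this restriction by a linear map, which the closed graph theorem makes
bounded. If `A D = C`, then `C C* = A (D D*) A* ≤ ‖D‖² A A*`, because `D D* ≤ ‖D‖²` in the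
C*-algebra of operators and conjugation preserves the order.
-/

open ContinuousLinearMap

theorem LinearMap.continuous_of_continuous_comp_of_injective {𝕜 : Type*}
    [NontriviallyNormedField 𝕜] {G K F : Type*} [NormedAddCommGroup G] [NormedSpace 𝕜 G]
    [CompleteSpace G] [NormedAddCommGroup K] [NormedSpace 𝕜 K] [CompleteSpace K]
    [TopologicalSpace F] [T2Space F] (g : G →ₗ[𝕜] K) {f : K → F} (hf : Continuous f)
    (hf_inj : Function.Injective f) (hfg : Continuous (f ∘ g)) : Continuous g :=
  g.continuous_of_seq_closed_graph fun _ x _ hu hgu =>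
    hf_inj <| tendsto_nhds_unique ((hf.tendsto _).comp hgu) ((hfg.tendsto x).comp hu)

namespace ContinuousLinearMap

variable {𝕜 E F G : Type*} [RCLike 𝕜] [NormedAddCommGroup E] [InnerProductSpace 𝕜 E]
  [CompleteSpace E] [NormedAddCommGroup F] [NormedSpace 𝕜 F]

theorem range_domRestrict_orthogonal_ker (A : E →L[𝕜] F) :
    LinearMap.range ((A : E →ₗ[𝕜] F).domRestrict (LinearMap.ker (A : E →ₗ[𝕜] F))ᗮ) =
      LinearMap.range (A : E →ₗ[𝕜] F) := by
  rw [LinearMap.range_domRestrict, ← Submodule.map_top,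
    ← (LinearMap.ker (A : E →ₗ[𝕜] F)).sup_orthogonal_of_hasOrthogonalProjection,
    Submodule.map_sup, LinearMap.le_ker_iff_map.mp le_rfl, bot_sup_eq]

/-- Douglas' factorization lemma. -/
theorem exists_comp_eq_of_range_le [NormedAddCommGroup G] [NormedSpace 𝕜 G] [CompleteSpace G]
    {A : E →L[𝕜] F} {C : G →L[𝕜] F}
    (h : LinearMap.range (C : G →ₗ[𝕜] F) ≤ LinearMap.range (A : E →ₗ[𝕜] F)) :
    ∃ D : G →L[𝕜] E, A ∘L D = C := by
  set K := (LinearMap.ker (A : E →ₗ[𝕜] F))ᗮ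
  set A' := (A : E →ₗ[𝕜] F).domRestrict K
  have hA' : Function.Injective A' :=
    LinearMap.injective_domRestrict_iff.mpr (Submodule.orthogonal_disjoint _).symm
  have hC : ∀ x, C x ∈ LinearMap.range A' := fun x =>
    (range_domRestrict_orthogonal_ker A).symm ▸ h ⟨x, rfl⟩
  let e := LinearEquiv.ofInjective A' hA'
  let g : G →ₗ[𝕜] K := e.symm ∘ₗ (C : G →ₗ[𝕜] F).codRestrict _ hC
  have hAg : ∀ x, A (g x) = C x := fun x =>
    congrArg Subtype.val (e.apply_symm_apply ⟨C x, hC x⟩)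
  have hg : Continuous g :=
    g.continuous_of_continuous_comp_of_injective (A.continuous.comp continuous_subtype_val) hA'
      (by simpa only [Function.comp_def, hAg] using C.continuous)
  exact ⟨K.subtypeL ∘L ⟨g, hg⟩, ext hAg⟩

end ContinuousLinearMap

theorem CStarAlgebra.mul_star_le_norm_sq_smul_of_eq_mul {A : Type*} [CStarAlgebra A]
    [PartialOrder A] [StarOrderedRing A] {a b c : A} (h : c = a * b) :
    c * star c ≤ ‖b‖ ^ 2 • (a * star a) :=
  calc c * star c = a * (b * star b) * star a := by rw [h, star_mul]; noncomm_ring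
    _ ≤ a * algebraMap ℝ A (‖b‖ ^ 2) * star a :=
      star_right_conjugate_le_conjugate CStarAlgebra.mul_star_le_algebraMap_norm_sq a
    _ = ‖b‖ ^ 2 • (a * star a) := by
      rw [Algebra.algebraMap_eq_smul_one, mul_smul_one, smul_mul_assoc]

/-- Theorem 2.4: for bounded operators on a complex Hilbert space,
`range C ⊆ range A` iff `AX = C` is solvable; in that case
`C C* ≤ λ (A A*)` for some `λ > 0` (Loewner order). -/
theorem stmt0 {H : Type*} [NormedAddCommGroup H] [InnerProductSpace ℂ H] [CompleteSpace H]
    (A C : H →L[ℂ] H) :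
    (LinearMap.range (C : H →ₗ[ℂ] H) ≤ LinearMap.range (A : H →ₗ[ℂ] H) ↔ ∃ D : H →L[ℂ] H, A ∘L D = C) ∧
    (LinearMap.range (C : H →ₗ[ℂ] H) ≤ LinearMap.range (A : H →ₗ[ℂ] H) →
      ∃ l : ℝ, 0 < l ∧ ((l : ℂ) • (A ∘L adjoint A) - C ∘L adjoint C).IsPositive) := by
  have douglas : LinearMap.range (C : H →ₗ[ℂ] H) ≤ LinearMap.range (A : H →ₗ[ℂ] H) ↔
      ∃ D : H →L[ℂ] H, A ∘L D = C :=
    ⟨exists_comp_eq_of_range_le, fun ⟨D, hD⟩ => hD ▸ LinearMap.range_comp_le_range _ _⟩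
  refine ⟨douglas, fun h => ?_⟩
  obtain ⟨D, hD⟩ := douglas.mp h
  refine ⟨‖D‖ ^ 2 + 1, by positivity, ?_⟩
  rw [← le_def, Complex.coe_smul]
  calc C ∘L adjoint C ≤ ‖D‖ ^ 2 • (A ∘L adjoint A) :=
        CStarAlgebra.mul_star_le_norm_sq_smul_of_eq_mul hD.symm
    _ ≤ (‖D‖ ^ 2 + 1) • (A ∘L adjoint A) :=
        smul_le_smul_of_nonneg_right (by linarith)
          ((nonneg_iff_isPositive _).mpr (isPositive_self_comp_adjoint A))
end

section
/- Let H be a complex Hilbert space and let A, C be bounded linear operators on H. If C ∘ C* = λ • (A ∘ A*) for some real λ > 0, then there exists a bounded linear operator X on H such that A ∘ X = C. -/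
/-!
This is an instance of Douglas' factorization lemma. Taking the inner product of
`C C* x = λ A A* x` with `x` gives `‖C* x‖ = √λ ‖A* x‖`, so `A* x ↦ C* x` is a well-defined
bounded operator on the range of `A*`. It extends continuously to the closure of that range and,
through the orthogonal projection, to all of `H`, giving `Y` with `Y A* = C*`; then `X = Y*`.
-/

open ContinuousLinearMap

namespace ContinuousLinearMap

variable {𝕜 E F G : Type*} [RCLike 𝕜]
  [NormedAddCommGroup F] [InnerProductSpace 𝕜 F] [CompleteSpace F]

section

variable [NormedAddCommGroup E] [InnerProductSpace 𝕜 E] [CompleteSpace E]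

theorem norm_apply_eq_sqrt_mul_of_adjoint_comp_self_eq_smul {A B : E →L[𝕜] F} {l : ℝ}
    (h : adjoint B ∘L B = (l : 𝕜) • (adjoint A ∘L A)) (x : E) :
    ‖B x‖ = √l * ‖A x‖ := by
  have hsq : ‖B x‖ ^ 2 = l * ‖A x‖ ^ 2 := by
    rw [apply_norm_sq_eq_inner_adjoint_left, h, apply_norm_sq_eq_inner_adjoint_left,
      smul_apply, inner_smul_left, RCLike.conj_ofReal, RCLike.re_ofReal_mul]
  rw [← Real.sqrt_sq (norm_nonneg (B x)), hsq, Real.sqrt_mul' _ (sq_nonneg _),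
    Real.sqrt_sq (norm_nonneg _)]

end

variable [NormedAddCommGroup E] [NormedSpace 𝕜 E]
  [NormedAddCommGroup G] [NormedSpace 𝕜 G] [CompleteSpace G]

theorem exists_comp_eq_of_norm_apply_le (T : E →L[𝕜] F) (S : E →L[𝕜] G) (c : ℝ)
    (h : ∀ x, ‖S x‖ ≤ c * ‖T x‖) : ∃ Y : F →L[𝕜] G, Y ∘L T = S := by
  let K := (LinearMap.range T.toLinearMap).topologicalClosure
  let e : E →ₗ[𝕜] K := T.toLinearMap.codRestrict K fun x =>
    (LinearMap.range T.toLinearMap).le_topologicalClosure ⟨x, rfl⟩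
  have he : DenseRange e := by
    refine Subtype.dense_iff.2 fun y hy => ?_
    rw [← Set.range_comp]
    exact hy
  refine ⟨S.toLinearMap.extendOfNorm e ∘L K.orthogonalProjectionOnto, ?_⟩
  ext x
  have hproj : K.orthogonalProjectionOnto (T x) = e x :=
    Submodule.orthogonalProjectionOnto_mem_subspace_eq_self (e x)
  simp only [comp_apply, hproj]
  exact LinearMap.extendOfNorm_eq he ⟨c, h⟩ x

end ContinuousLinearMap

theorem stmt1_general {H : Type*} [NormedAddCommGroup H] [InnerProductSpace ℂ H] [CompleteSpace H]
    (A C : H →L[ℂ] H) (l : ℝ)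
    (h : C ∘L adjoint C = (l : ℂ) • (A ∘L adjoint A)) :
    ∃ X : H →L[ℂ] H, A ∘L X = C := by
  have hnorm : ∀ x, ‖adjoint C x‖ = √l * ‖adjoint A x‖ :=
    norm_apply_eq_sqrt_mul_of_adjoint_comp_self_eq_smul (by rwa [adjoint_adjoint, adjoint_adjoint])
  obtain ⟨Y, hY⟩ :=
    exists_comp_eq_of_norm_apply_le (adjoint A) (adjoint C) √l fun x => (hnorm x).le
  refine ⟨adjoint Y, ?_⟩
  simpa only [adjoint_comp, adjoint_adjoint] using congrArg adjoint hY

/-- Theorem 2.5: if `C C* = λ A A*` for some `λ > 0`, then `AX = C` has a solution. -/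
theorem stmt1 {H : Type*} [NormedAddCommGroup H] [InnerProductSpace ℂ H] [CompleteSpace H]
    (A C : H →L[ℂ] H) (l : ℝ) (hl : 0 < l)
    (h : C ∘L adjoint C = (l : ℂ) • (A ∘L adjoint A)) :
    ∃ X : H →L[ℂ] H, A ∘L X = C :=
  stmt1_general A C l h
end

section
/- Let H be a complex Hilbert space and let A, C be bounded linear operators on H. If A ∘ A* = λ • (C ∘ C*) for some real λ > 0, then the range of A equals the range of C. -/
/-!
Douglas' lemma: if `‖A* x‖ ≤ M ‖C* x‖` for all `x`, then `V (C* x) := A* x` is a well-defined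
bounded operator on the range of `C*`; extending it by continuity to the closure of that range
and by zero on the orthogonal complement gives `V` with `V C* = A*`, hence `A = C V*` and
`range A ⊆ range C`. The identity `A A* = λ C C*` gives `‖A* x‖ = √λ ‖C* x‖`, so the lemma
applies in both directions.
-/

open ContinuousLinearMap

namespace ContinuousLinearMap

variable {𝕜 E F G : Type*} [RCLike 𝕜]

theorem exists_comp_eq_of_norm_le
    [NormedAddCommGroup E] [NormedSpace 𝕜 E] [CompleteSpace E]
    [NormedAddCommGroup F] [NormedSpace 𝕜 F]
    [NormedAddCommGroup G] [InnerProductSpace 𝕜 G] [CompleteSpace G]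
    {B : F →L[𝕜] E} {D : F →L[𝕜] G} {M : ℝ}
    (hBD : ∀ x, ‖B x‖ ≤ M * ‖D x‖) : ∃ V : G →L[𝕜] E, V ∘L D = B := by
  set K := (LinearMap.range (D : F →ₗ[𝕜] G)).topologicalClosure
  let e : F →ₗ[𝕜] K := (D : F →ₗ[𝕜] G).codRestrict K
    fun x ↦ Submodule.le_topologicalClosure _ (LinearMap.mem_range_self _ x)
  have he : DenseRange e := by
    rw [DenseRange, Subtype.dense_iff, ← Set.range_comp]
    exact (Submodule.topologicalClosure_coe _).le
  refine ⟨(B : F →ₗ[𝕜] E).extendOfNorm e ∘L K.orthogonalProjectionOnto, ?_⟩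
  ext x
  have hproj : K.orthogonalProjectionOnto (D x) = e x :=
    K.orthogonalProjectionOnto_mem_subspace_eq_self (e x)
  simpa [hproj] using LinearMap.extendOfNorm_eq he ⟨M, hBD⟩ x

variable [NormedAddCommGroup E] [InnerProductSpace 𝕜 E] [CompleteSpace E]
  [NormedAddCommGroup F] [InnerProductSpace 𝕜 F] [CompleteSpace F]
  [NormedAddCommGroup G] [InnerProductSpace 𝕜 G] [CompleteSpace G]

theorem range_le_range_of_norm_adjoint_le {A : E →L[𝕜] F} {C : G →L[𝕜] F} {M : ℝ}
    (h : ∀ x, ‖adjoint A x‖ ≤ M * ‖adjoint C x‖) :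
    LinearMap.range (A : E →ₗ[𝕜] F) ≤ LinearMap.range (C : G →ₗ[𝕜] F) := by
  obtain ⟨V, hV⟩ := exists_comp_eq_of_norm_le h
  have hCV : C ∘L adjoint V = A := by
    simpa only [adjoint_comp, adjoint_adjoint] using congrArg adjoint hV
  rintro _ ⟨x, rfl⟩
  exact ⟨adjoint V x, by rw [← hCV]; rfl⟩

theorem norm_adjoint_apply_sq (A : E →L[𝕜] F) (x : F) :
    ‖adjoint A x‖ ^ 2 = RCLike.re (inner 𝕜 x ((A ∘L adjoint A) x)) := by
  simpa only [adjoint_adjoint] using apply_norm_sq_eq_inner_adjoint_right (adjoint A) x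

theorem norm_adjoint_apply_eq_of_comp_adjoint_eq_smul {A : E →L[𝕜] F} {C : G →L[𝕜] F} {l : ℝ}
    (hl : 0 ≤ l) (h : A ∘L adjoint A = (l : 𝕜) • (C ∘L adjoint C)) (x : F) :
    ‖adjoint A x‖ = √l * ‖adjoint C x‖ := by
  have hsq : ‖adjoint A x‖ ^ 2 = l * ‖adjoint C x‖ ^ 2 := by
    rw [norm_adjoint_apply_sq, norm_adjoint_apply_sq, h, smul_apply, inner_smul_right,
      RCLike.re_ofReal_mul]
  rw [← Real.sqrt_sq (norm_nonneg (adjoint A x)), hsq, Real.sqrt_mul hl,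
    Real.sqrt_sq (norm_nonneg _)]

end ContinuousLinearMap

/-- Corollary 2.6: if `A A* = λ C C*` for some `λ > 0`, then `range A = range C`. -/
theorem stmt2 {H : Type*} [NormedAddCommGroup H] [InnerProductSpace ℂ H] [CompleteSpace H]
    (A C : H →L[ℂ] H) (l : ℝ) (hl : 0 < l)
    (h : A ∘L adjoint A = (l : ℂ) • (C ∘L adjoint C)) :
    LinearMap.range (A : H →ₗ[ℂ] H) = LinearMap.range (C : H →ₗ[ℂ] H) := by
  have hAC := norm_adjoint_apply_eq_of_comp_adjoint_eq_smul hl.le h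
  have hsqrt : √l ≠ 0 := by positivity
  refine le_antisymm (range_le_range_of_norm_adjoint_le fun x ↦ (hAC x).le)
    (range_le_range_of_norm_adjoint_le (M := (√l)⁻¹) fun x ↦ ?_)
  rw [hAC, inv_mul_cancel_left₀ hsqrt]
end

section
/- Let H be a complex Hilbert space and let A, B, W₁, W₂, W₃, W₄ be bounded linear operators on H satisfying A ∘ W₂ ∘ P_{B*} + P_A ∘ W₃ ∘ B = 0. Then the operators X_h := N_A ∘ W₁ + W₂ ∘ P_{B*} and Y_h := P_A ∘ W₃ + W₄ ∘ N_{B*} satisfy A ∘ X_h + Y_h ∘ B = 0. -/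
open ContinuousLinearMap

variable {H : Type*} [NormedAddCommGroup H] [InnerProductSpace ℂ H] [CompleteSpace H]

/-- The orthogonal projection of `H` onto the closure of the range of `A`,
regarded as a bounded operator on `H`. -/
noncomputable def rangeProj (A : H →L[ℂ] H) : H →L[ℂ] H :=
  haveI : CompleteSpace (LinearMap.range (A : H →ₗ[ℂ] H)).topologicalClosure :=
    (Submodule.isClosed_topologicalClosure _).completeSpace_coe
  (LinearMap.range (A : H →ₗ[ℂ] H)).topologicalClosure.subtypeL ∘L
    Submodule.orthogonalProjectionOnto (LinearMap.range (A : H →ₗ[ℂ] H)).topologicalClosure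

lemma rangeProj_eq_starProjection (A : H →L[ℂ] H) :
    rangeProj A = A.range.topologicalClosure.starProjection := rfl

lemma one_sub_rangeProj_apply_mem_orthogonal (A : H →L[ℂ] H) (x : H) :
    (1 - rangeProj A) x ∈ A.rangeᗮ := by
  rw [← Submodule.orthogonal_closure, rangeProj_eq_starProjection]
  exact Submodule.sub_starProjection_mem_orthogonal x

lemma one_sub_rangeProj_comp_self (B : H →L[ℂ] H) : (1 - rangeProj B) ∘L B = 0 := by
  ext x
  rw [comp_apply, sub_apply, one_apply_eq_self, zero_apply, sub_eq_zero, eq_comm,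
    rangeProj_eq_starProjection, Submodule.starProjection_eq_self_iff]
  exact B.range.le_topologicalClosure ⟨x, rfl⟩

lemma comp_one_sub_rangeProj_adjoint (A : H →L[ℂ] H) :
    A ∘L (1 - rangeProj (adjoint A)) = 0 := by
  ext x
  have hx := one_sub_rangeProj_apply_mem_orthogonal (adjoint A) x
  rwa [orthogonal_range, adjoint_adjoint] at hx

/-- Theorem 3.1 (first half): with `N_A = I - P_{A*}`, `N_{B*} = I - P_B`,
if `A W₂ P_{B*} + P_A W₃ B = 0` then `X_h = N_A W₁ + W₂ P_{B*}` and
`Y_h = P_A W₃ + W₄ N_{B*}` satisfy `A X_h + Y_h B = 0`. -/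
theorem stmt4 (A B W₁ W₂ W₃ W₄ : H →L[ℂ] H)
    (h : A ∘L W₂ ∘L rangeProj (adjoint B) + rangeProj A ∘L W₃ ∘L B = 0) :
    A ∘L ((1 - rangeProj (adjoint A)) ∘L W₁ + W₂ ∘L rangeProj (adjoint B)) +
      (rangeProj A ∘L W₃ + W₄ ∘L (1 - rangeProj B)) ∘L B = 0 := by
  have hA : A ∘L (1 - rangeProj (adjoint A)) ∘L W₁ = 0 := by
    rw [← comp_assoc, comp_one_sub_rangeProj_adjoint, zero_comp]
  have hB : (W₄ ∘L (1 - rangeProj B)) ∘L B = 0 := by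
    rw [comp_assoc, one_sub_rangeProj_comp_self, comp_zero]
  rw [comp_add, add_comp, hA, hB, zero_add, add_zero, comp_assoc]
  exact h
end

section
/- Let H be a complex Hilbert space and let A, B, C be bounded linear operators on H. If the range of C ∘ N_B is contained in the range of A and the range of P_{B*} ∘ C* is contained in the range of B*, then there exist bounded linear operators X and Y on H such that A ∘ X + Y ∘ B = C. -/
/-!
Douglas' lemma: if `range C ⊆ range A`, then `C = A X` for a bounded `X`, obtained by inverting
`A` on `(ker A)ᗮ` and checking continuity with the closed graph theorem. Applied to the first
hypothesis it gives `A X = C N_B`; applied to the second it gives `B* Z = P_{B*} C*`, whose adjoint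
is `Z* B = C P_{B*}`. Adding, `A X + Z* B = C (N_B + P_{B*}) = C`.
-/

open ContinuousLinearMap

variable {H : Type*} [NormedAddCommGroup H] [InnerProductSpace ℂ H] [CompleteSpace H]

open Filter Topology

theorem LinearMap.range_domRestrict_of_isCompl {R M N : Type*} [Ring R] [AddCommGroup M]
    [Module R M] [AddCommGroup N] [Module R N] (f : M →ₗ[R] N) {S : Submodule R M}
    (h : IsCompl (ker f) S) : range (f.domRestrict S) = range f := by
  have hker : (ker f).map f = ⊥ := le_bot_iff.1 (Submodule.map_le_iff_le_comap.2 le_rfl)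
  rw [range_domRestrict, range_eq_map, ← h.sup_eq_top, Submodule.map_sup, hker, bot_sup_eq]

theorem LinearMap.injective_domRestrict_of_disjoint {R M N : Type*} [Ring R] [AddCommGroup M]
    [Module R M] [AddCommGroup N] [Module R N] (f : M →ₗ[R] N) {S : Submodule R M}
    (h : Disjoint (ker f) S) : Function.Injective (f.domRestrict S) := by
  rw [← ker_eq_bot, ker_domRestrict]
  exact Submodule.disjoint_iff_comap_eq_bot.1 h.symm

section Douglas

variable {𝕜 E F G : Type*} [RCLike 𝕜]
  [NormedAddCommGroup E] [NormedSpace 𝕜 E] [CompleteSpace E]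
  [NormedAddCommGroup F] [NormedSpace 𝕜 F]
  [NormedAddCommGroup G] [NormedSpace 𝕜 G] [CompleteSpace G]

theorem LinearMap.continuous_of_injective_of_continuous_comp (A : E →L[𝕜] F)
    (hA : Function.Injective A) (g : G →ₗ[𝕜] E) (hAg : Continuous (A ∘ g)) : Continuous g := by
  refine g.continuous_of_seq_closed_graph fun u x y hu hgu => hA ?_
  have hlim₁ : Tendsto (A ∘ g ∘ u) atTop (𝓝 (A y)) := (A.continuous.tendsto y).comp hgu
  have hlim₂ : Tendsto (A ∘ g ∘ u) atTop (𝓝 (A (g x))) := (hAg.tendsto x).comp hu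
  exact tendsto_nhds_unique hlim₁ hlim₂

theorem ContinuousLinearMap.exists_comp_eq_of_range_le_of_isCompl (A : E →L[𝕜] F)
    (C : G →L[𝕜] F) {S : Submodule 𝕜 E} (hS : IsClosed (S : Set E))
    (hcompl : IsCompl (LinearMap.ker (A : E →ₗ[𝕜] F)) S)
    (h : LinearMap.range (C : G →ₗ[𝕜] F) ≤ LinearMap.range (A : E →ₗ[𝕜] F)) :
    ∃ X : G →L[𝕜] E, A ∘L X = C := by
  have : CompleteSpace S := hS.completeSpace_coe
  have hinj := (A : E →ₗ[𝕜] F).injective_domRestrict_of_disjoint hcompl.disjoint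
  have hrange : ∀ v, C v ∈ LinearMap.range ((A : E →ₗ[𝕜] F).domRestrict S) := fun v => by
    rw [LinearMap.range_domRestrict_of_isCompl _ hcompl]
    exact h ⟨v, rfl⟩
  let g := LinearMap.codRestrictOfInjective (C : G →ₗ[𝕜] F) _ hinj hrange
  have hAg : ∀ v, A (g v) = C v := LinearMap.codRestrictOfInjective_comp_apply _ _ hinj hrange
  have hg : Continuous g :=
    LinearMap.continuous_of_injective_of_continuous_comp (A ∘L S.subtypeL) hinj g
      (by convert C.continuous using 1; exact funext hAg)
  exact ⟨S.subtypeL ∘L ⟨g, hg⟩, ext hAg⟩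

end Douglas

theorem ContinuousLinearMap.exists_comp_eq_of_range_le_s6 {𝕜 E F G : Type*} [RCLike 𝕜]
    [NormedAddCommGroup E] [InnerProductSpace 𝕜 E] [CompleteSpace E]
    [NormedAddCommGroup F] [NormedSpace 𝕜 F]
    [NormedAddCommGroup G] [NormedSpace 𝕜 G] [CompleteSpace G] (A : E →L[𝕜] F) (C : G →L[𝕜] F)
    (h : LinearMap.range (C : G →ₗ[𝕜] F) ≤ LinearMap.range (A : E →ₗ[𝕜] F)) :
    ∃ X : G →L[𝕜] E, A ∘L X = C :=
  have : CompleteSpace (LinearMap.ker (A : E →ₗ[𝕜] F)) := A.isClosed_ker.completeSpace_coe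
  A.exists_comp_eq_of_range_le_of_isCompl C (Submodule.isClosed_orthogonal _)
    (Submodule.isCompl_orthogonal _) h

theorem adjoint_rangeProj (A : H →L[ℂ] H) : adjoint (rangeProj A) = rangeProj A :=
  have : CompleteSpace (LinearMap.range (A : H →ₗ[ℂ] H)).topologicalClosure :=
    (Submodule.isClosed_topologicalClosure _).completeSpace_coe
  isSelfAdjoint_starProjection _

/-- Theorem 3.3 (existence part): if `range (C N_B) ⊆ range A` and
`range (P_{B*} C*) ⊆ range B*`, then `A X + Y B = C` has a solution. -/
theorem stmt6 (A B C : H →L[ℂ] H)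
    (h1 : LinearMap.range ((C ∘L (1 - rangeProj (adjoint B)) : H →L[ℂ] H) : H →ₗ[ℂ] H) ≤
      LinearMap.range (A : H →ₗ[ℂ] H))
    (h2 : LinearMap.range ((rangeProj (adjoint B) ∘L adjoint C : H →L[ℂ] H) : H →ₗ[ℂ] H) ≤
      LinearMap.range ((adjoint B : H →L[ℂ] H) : H →ₗ[ℂ] H)) :
    ∃ X Y : H →L[ℂ] H, A ∘L X + Y ∘L B = C := by
  obtain ⟨X, hX⟩ := A.exists_comp_eq_of_range_le_s6 _ h1
  obtain ⟨Z, hZ⟩ := (adjoint B).exists_comp_eq_of_range_le_s6 _ h2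
  have hZB : adjoint Z ∘L B = C ∘L rangeProj (adjoint B) := by
    simpa only [adjoint_comp, adjoint_adjoint, adjoint_rangeProj] using congrArg adjoint hZ
  refine ⟨X, adjoint Z, ?_⟩
  rw [hX, hZB, ← comp_add, sub_add_cancel]
  exact C.comp_id
end

section
/- Let H be a complex Hilbert space and let A, B be bounded linear operators on H with range A = range B and range A ≠ {0}. Then there exist nonzero bounded linear operators X and Y on H such that A ∘ X ∘ A* + B ∘ Y ∘ B* = 0. -/
open ContinuousLinearMap InnerProductSpace

/-! Pick `a = A u = B v ≠ 0` in the common range. Congruence by `A` turns the rank-one operator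
`u ⊗ u` into `A u ⊗ A u = a ⊗ a`, and likewise by `B` turns `v ⊗ v` into `a ⊗ a`, so `X = u ⊗ u` and
`Y = -(v ⊗ v)` solve the equation. -/

theorem InnerProductSpace.comp_rankOne_comp_adjoint {𝕜 E F : Type*} [RCLike 𝕜]
    [NormedAddCommGroup E] [InnerProductSpace 𝕜 E] [CompleteSpace E]
    [NormedAddCommGroup F] [InnerProductSpace 𝕜 F] [CompleteSpace F]
    (T : E →L[𝕜] F) (x y : E) :
    T ∘L rankOne 𝕜 x y ∘L adjoint T = rankOne 𝕜 (T x) (T y) := by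
  rw [rankOne_comp, adjoint_adjoint, comp_rankOne]

/-- Corollary 3.7: if `range A = range B` and `range A ≠ 0`, then
`A X A* + B Y B* = 0` has nonzero solutions `X, Y`. -/
theorem stmt10 {H : Type*} [NormedAddCommGroup H] [InnerProductSpace ℂ H] [CompleteSpace H]
    (A B : H →L[ℂ] H) (hr : LinearMap.range (A : H →ₗ[ℂ] H) = LinearMap.range (B : H →ₗ[ℂ] H))
    (hne : LinearMap.range (A : H →ₗ[ℂ] H) ≠ ⊥) :
    ∃ X Y : H →L[ℂ] H, X ≠ 0 ∧ Y ≠ 0 ∧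
      A ∘L X ∘L adjoint A + B ∘L Y ∘L adjoint B = 0 := by
  obtain ⟨_, ⟨u, rfl⟩, hAu⟩ := Submodule.exists_mem_ne_zero_of_ne_bot hne
  obtain ⟨v, hBv⟩ : A u ∈ LinearMap.range (B : H →ₗ[ℂ] H) := hr ▸ ⟨u, rfl⟩
  simp only [ContinuousLinearMap.coe_coe] at hBv
  have hu : u ≠ 0 := ne_of_apply_ne A (by simpa using hAu)
  have hv : v ≠ 0 := ne_of_apply_ne B (by simpa [hBv] using hAu)
  refine ⟨rankOne ℂ u u, -rankOne ℂ v v, rankOne_ne_zero hu hu,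
    neg_ne_zero.mpr (rankOne_ne_zero hv hv), ?_⟩
  rw [neg_comp, comp_neg, comp_rankOne_comp_adjoint, comp_rankOne_comp_adjoint, hBv,
    add_neg_cancel]
end
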